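/- Let n ≥ 1, let p be a permutation of {1,…,n} and let q be its complement, i.e., q_i = n + 1 − p_i for all i. Then the minmax trees T^m_p and T^m_q have the same shape on positions: for all indices j and k, the entry p_j is a child of the entry p_k in T^m_p if and only if the entry q_j is a child of the entry q_k in T^m_q. In particular, p_i is a leaf of T^m_p if and only if q_i is a leaf of T^m_q. -/

import Mathlib

/-- Binary trees with natural-number labels, used to model minmax trees of
permutations. -/
inductive BTree where
  | nil : BTree
  | node : ℕ → BTree → BTree → BTree
deriving DecidableEq, Repr

namespace BTree

/-- The label of the root (if any). -/
def rootVal : BTree → Option ℕ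
  | .nil => none
  | .node v _ _ => some v

/-- Whether the value `x` occurs as a label in the tree. -/
def memB : BTree → ℕ → Bool
  | .nil, _ => false
  | .node v l r, x => (x == v) || memB l x || memB r x

/-- The number of children of the (unique, for permutations) node labelled `x`. -/
def numChildren : BTree → ℕ → ℕ
  | .nil, _ => 0
  | .node v l r, x =>
      if x = v then (if l = .nil then 0 else 1) + (if r = .nil then 0 else 1)
      else numChildren l x + numChildren r x

/-- `x` is a leaf of the tree: it occurs in the tree and has no children. -/
def IsLeaf (t : BTree) (x : ℕ) : Prop := t.memB x = true ∧ t.numChildren x = 0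

instance (t : BTree) (x : ℕ) : Decidable (t.IsLeaf x) := by unfold IsLeaf; infer_instance

/-- `childB t x y = true` iff `x` is a child of `y` in `t`, i.e. `x` is the root of
the left or the right subtree hanging from `y`. -/
def childB : BTree → ℕ → ℕ → Bool
  | .nil, _, _ => false
  | .node v l r, x, y =>
      ((y == v) && (l.rootVal == some x || r.rootVal == some x))
      || childB l x y || childB r x y

/-- `ancB t x y = true` iff `x` is a (strict) ancestor of `y` in `t`, i.e. `y` lies
in a subtree hanging from `x`. -/
def ancB : BTree → ℕ → ℕ → Bool
  | .nil, _, _ => false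
  | .node v l r, x, y =>
      ((x == v) && (memB l y || memB r y)) || ancB l x y || ancB r x y

end BTree

/-- `x` is the leftmost-eligible extreme letter of `l`: the minimum or the maximum. -/
def isExtreme (l : List ℕ) (x : ℕ) : Bool :=
  (l.min? == some x) || (l.max? == some x)

/-- Fuelled construction of the minmax tree of a list of distinct naturals:
split the list as `u ++ [m] ++ v` where `m` is the leftmost of the minimum and
maximum letters, put `m` at the root and recurse on `u` (left) and `v` (right). -/
def mmAux : ℕ → List ℕ → BTree
  | 0, _ => .nil
  | fuel+1, l =>
    if l.isEmpty then .nil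
    else
      let k := l.findIdx (isExtreme l)
      .node (l.getD k 0) (mmAux fuel (l.take k)) (mmAux fuel (l.drop (k+1)))

/-- The minmax tree `T^m_p` of a word `l` (with distinct letters). -/
def minmaxTree (l : List ℕ) : BTree := mmAux l.length l

/-- The word `p_1 p_2 … p_n` on the letters `{1,…,n}` associated to a permutation
`p` of `Fin n`. -/
def permList (n : ℕ) (p : Equiv.Perm (Fin n)) : List ℕ :=
  List.ofFn (fun i => (p i : ℕ) + 1)

/-- The `i`-th entry `p_i` (1-indexed) of the permutation `p`. -/
def entryAt (n : ℕ) (p : Equiv.Perm (Fin n)) (i : ℕ) : ℕ :=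
  (permList n p).getD (i - 1) 0

/-!
Complementation `x ↦ n + 1 - x` reverses the order of the letters, so it exchanges the minimum
and the maximum of every subword and therefore does not move the leftmost extreme letter. By
induction, the minmax tree of the complement is the minmax tree of `p` with every label
complemented, and a relabelling that is injective on the labels preserves children and leaves.
-/

theorem Set.InjOn.beq_apply_apply {α β : Type*} [BEq α] [LawfulBEq α] [BEq β] [LawfulBEq β]
    {f : α → β} {s : Set α} (hf : Set.InjOn f s) {a b : α} (ha : a ∈ s) (hb : b ∈ s) :
    (f a == f b) = (a == b) :=
  Bool.eq_iff_iff.mpr (by simp only [beq_iff_eq, hf.eq_iff ha hb])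

theorem List.min?_map_of_antitoneOn {α β : Type*} [LinearOrder α] [LinearOrder β] {f : α → β}
    {s : Set α} (hf : AntitoneOn f s) {l : List α} (hl : ∀ x ∈ l, x ∈ s) :
    (l.map f).min? = l.max?.map f := by
  cases h : l.max? with
  | none => simp_all
  | some M =>
    obtain ⟨hM, hle⟩ := List.max?_eq_some_iff.mp h
    refine List.min?_eq_some_iff.mpr ⟨List.mem_map_of_mem hM, ?_⟩
    simp only [List.mem_map, forall_exists_index, and_imp, forall_apply_eq_imp_iff₂]
    exact fun b hb => hf (hl b hb) (hl M hM) (hle b hb)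

theorem List.max?_map_of_antitoneOn {α β : Type*} [LinearOrder α] [LinearOrder β] {f : α → β}
    {s : Set α} (hf : AntitoneOn f s) {l : List α} (hl : ∀ x ∈ l, x ∈ s) :
    (l.map f).max? = l.min?.map f := by
  cases h : l.min? with
  | none => simp_all
  | some m =>
    obtain ⟨hm, hle⟩ := List.min?_eq_some_iff.mp h
    refine List.max?_eq_some_iff.mpr ⟨List.mem_map_of_mem hm, ?_⟩
    simp only [List.mem_map, forall_exists_index, and_imp, forall_apply_eq_imp_iff₂]
    exact fun b hb => hf (hl m hm) (hl b hb) (hle b hb)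

namespace BTree

def map (f : ℕ → ℕ) : BTree → BTree
  | .nil => .nil
  | .node v l r => .node (f v) (map f l) (map f r)

def labels (t : BTree) : Set ℕ := {x | t.memB x = true}

@[simp]
theorem map_eq_nil_iff {f : ℕ → ℕ} {t : BTree} : t.map f = .nil ↔ t = .nil := by
  cases t <;> simp [map]

theorem labels_node_subset_iff {v : ℕ} {l r : BTree} {s : Set ℕ} :
    (node v l r).labels ⊆ s ↔ v ∈ s ∧ l.labels ⊆ s ∧ r.labels ⊆ s := by
  simp only [labels, memB, Bool.or_eq_true, beq_iff_eq, Set.ofPred_or, Set.ofPred_eq_eq_singleton,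
    Set.union_subset_iff, Set.singleton_subset_iff, and_assoc]

section Relabel

variable {f : ℕ → ℕ} {s : Set ℕ}

theorem memB_map (hf : Set.InjOn f s) {t : BTree} (ht : t.labels ⊆ s) {x : ℕ} (hx : x ∈ s) :
    (t.map f).memB (f x) = t.memB x := by
  induction t with
  | nil => rfl
  | node v l r ihl ihr =>
    obtain ⟨hv, hl, hr⟩ := labels_node_subset_iff.mp ht
    simp only [map, memB, ihl hl, ihr hr, hf.beq_apply_apply hx hv]

theorem numChildren_map (hf : Set.InjOn f s) {t : BTree} (ht : t.labels ⊆ s) {x : ℕ}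
    (hx : x ∈ s) : (t.map f).numChildren (f x) = t.numChildren x := by
  induction t with
  | nil => rfl
  | node v l r ihl ihr =>
    obtain ⟨hv, hl, hr⟩ := labels_node_subset_iff.mp ht
    simp only [map, numChildren, hf.eq_iff hx hv, map_eq_nil_iff, ihl hl, ihr hr]

theorem rootVal_map_beq_some (hf : Set.InjOn f s) {t : BTree} (ht : t.labels ⊆ s) {x : ℕ}
    (hx : x ∈ s) : ((t.map f).rootVal == some (f x)) = (t.rootVal == some x) := by
  cases t with
  | nil => rfl
  | node v l r =>
    simp only [map, rootVal, Option.some_beq_some,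
      hf.beq_apply_apply (labels_node_subset_iff.mp ht).1 hx]

theorem childB_map (hf : Set.InjOn f s) {t : BTree} (ht : t.labels ⊆ s) {x y : ℕ}
    (hx : x ∈ s) (hy : y ∈ s) : (t.map f).childB (f x) (f y) = t.childB x y := by
  induction t with
  | nil => rfl
  | node v l r ihl ihr =>
    obtain ⟨hv, hl, hr⟩ := labels_node_subset_iff.mp ht
    simp only [map, childB, ihl hl, ihr hr, hf.beq_apply_apply hy hv,
      rootVal_map_beq_some hf hl hx, rootVal_map_beq_some hf hr hx]

theorem isLeaf_map (hf : Set.InjOn f s) {t : BTree} (ht : t.labels ⊆ s) {x : ℕ} (hx : x ∈ s) :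
    (t.map f).IsLeaf (f x) ↔ t.IsLeaf x := by
  rw [IsLeaf, IsLeaf, memB_map hf ht hx, numChildren_map hf ht hx]

end Relabel

end BTree

theorem findIdx_isExtreme_lt_length {l : List ℕ} (hl : l ≠ []) :
    l.findIdx (isExtreme l) < l.length := by
  obtain ⟨m, hm⟩ := Option.isSome_iff_exists.mp (List.isSome_min?_of_ne_nil hl)
  exact List.findIdx_lt_length.mpr ⟨m, List.min?_mem hm, by simp [isExtreme, hm]⟩

theorem mmAux_succ_of_ne_nil (fuel : ℕ) {l : List ℕ} (hl : l ≠ []) :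
    mmAux (fuel + 1) l =
      .node (l[l.findIdx (isExtreme l)]'(findIdx_isExtreme_lt_length hl))
        (mmAux fuel (l.take (l.findIdx (isExtreme l))))
        (mmAux fuel (l.drop (l.findIdx (isExtreme l) + 1))) := by
  simp [mmAux, hl, List.getElem?_eq_getElem (findIdx_isExtreme_lt_length hl)]

theorem labels_mmAux_subset (fuel : ℕ) (l : List ℕ) : (mmAux fuel l).labels ⊆ {x | x ∈ l} := by
  induction fuel generalizing l with
  | zero => simp [mmAux, BTree.labels, BTree.memB]
  | succ fuel ih =>
    rcases eq_or_ne l [] with rfl | hl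
    · simp [mmAux, BTree.labels, BTree.memB]
    rw [mmAux_succ_of_ne_nil fuel hl, BTree.labels_node_subset_iff]
    exact ⟨List.getElem_mem _, (ih _).trans fun x hx => List.mem_of_mem_take hx,
      (ih _).trans fun x hx => List.mem_of_mem_drop hx⟩

section StrictAnti

variable {f : ℕ → ℕ} {s : Set ℕ}

theorem isExtreme_map_of_strictAntiOn (hf : StrictAntiOn f s) {l : List ℕ} (hl : ∀ x ∈ l, x ∈ s)
    {y : ℕ} (hy : y ∈ l) : isExtreme (l.map f) (f y) = isExtreme l y := by
  have hne : l ≠ [] := List.ne_nil_of_mem hy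
  obtain ⟨m, hm⟩ := Option.isSome_iff_exists.mp (List.isSome_min?_of_ne_nil hne)
  obtain ⟨M, hM⟩ := Option.isSome_iff_exists.mp (List.isSome_max?_of_ne_nil hne)
  simp only [isExtreme, List.min?_map_of_antitoneOn hf.antitoneOn hl,
    List.max?_map_of_antitoneOn hf.antitoneOn hl, hm, hM, Option.map_some, Option.some_beq_some,
    hf.injOn.beq_apply_apply (hl m (List.min?_mem hm)) (hl y hy),
    hf.injOn.beq_apply_apply (hl M (List.max?_mem hM)) (hl y hy), Bool.or_comm]

theorem findIdx_isExtreme_map_of_strictAntiOn (hf : StrictAntiOn f s) {l : List ℕ}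
    (hl : ∀ x ∈ l, x ∈ s) :
    (l.map f).findIdx (isExtreme (l.map f)) = l.findIdx (isExtreme l) := by
  have h : ∀ x ∈ l, (isExtreme (l.map f) ∘ f) x = isExtreme l x :=
    fun x hx => isExtreme_map_of_strictAntiOn hf hl hx
  rw [List.findIdx_map]
  exact le_antisymm (List.findIdx_le_findIdx fun x hx => (h x hx).symm ▸ id)
    (List.findIdx_le_findIdx fun x hx => (h x hx) ▸ id)

theorem mmAux_map_of_strictAntiOn (hf : StrictAntiOn f s) (fuel : ℕ) {l : List ℕ}
    (hl : ∀ x ∈ l, x ∈ s) : mmAux fuel (l.map f) = (mmAux fuel l).map f := by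
  induction fuel generalizing l with
  | zero => rfl
  | succ fuel ih =>
    rcases eq_or_ne l [] with rfl | hne
    · simp [mmAux, BTree.map]
    have hne' : l.map f ≠ [] := by simpa using hne
    rw [mmAux_succ_of_ne_nil fuel hne, mmAux_succ_of_ne_nil fuel hne', BTree.map]
    simp only [findIdx_isExtreme_map_of_strictAntiOn hf hl, List.getElem_map, ← List.map_take,
      ← List.map_drop, ih fun x hx => hl x (List.mem_of_mem_take hx),
      ih fun x hx => hl x (List.mem_of_mem_drop hx)]

end StrictAnti

theorem minmaxTree_map_of_strictAntiOn {f : ℕ → ℕ} {s : Set ℕ} (hf : StrictAntiOn f s)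
    {l : List ℕ} (hl : ∀ x ∈ l, x ∈ s) : minmaxTree (l.map f) = (minmaxTree l).map f := by
  rw [minmaxTree, minmaxTree, List.length_map, mmAux_map_of_strictAntiOn hf _ hl]

theorem permList_mem_Iic {n : ℕ} (p : Equiv.Perm (Fin n)) :
    ∀ x ∈ permList n p, x ∈ Set.Iic n := by
  simp only [permList, List.mem_ofFn, Set.mem_Iic, forall_exists_index]
  rintro _ i rfl
  exact (p i).isLt

theorem strictAntiOn_complement (n : ℕ) : StrictAntiOn (n + 1 - ·) (Set.Iic n) :=
  fun _ _ _ hb hab => Nat.sub_lt_sub_left (hab.trans_le (Nat.le_succ_of_le hb)) hab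

theorem entryAt_mem_Iic {n : ℕ} (p : Equiv.Perm (Fin n)) {i : ℕ} (hi : i - 1 < n) :
    entryAt n p i ∈ Set.Iic n := by
  have hi' : i - 1 < (permList n p).length := by simpa [permList] using hi
  simpa only [entryAt, List.getD_eq_getElem _ 0 hi'] using
    permList_mem_Iic p _ (List.getElem_mem hi')

section Complement

variable {n : ℕ} {p q : Equiv.Perm (Fin n)}

theorem permList_eq_map_of_complement
    (hq : ∀ i : Fin n, ((q i : ℕ) + 1) = n + 1 - ((p i : ℕ) + 1)) :
    permList n q = (permList n p).map (n + 1 - ·) := by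
  simp only [permList, List.map_ofFn]
  exact congrArg _ (funext hq)

theorem entryAt_of_complement (hq : ∀ i : Fin n, ((q i : ℕ) + 1) = n + 1 - ((p i : ℕ) + 1))
    {i : ℕ} (hi : i - 1 < n) : entryAt n q i = n + 1 - entryAt n p i := by
  have hi' : i - 1 < (permList n p).length := by simpa [permList] using hi
  rw [entryAt, entryAt, permList_eq_map_of_complement hq,
    List.getD_eq_getElem _ 0 (by simpa using hi'), List.getElem_map, List.getD_eq_getElem _ 0 hi']

end Complement

theorem complement_same_shape_general (n : ℕ) (p q : Equiv.Perm (Fin n))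
    (hq : ∀ i : Fin n, ((q i : ℕ) + 1) = n + 1 - ((p i : ℕ) + 1)) :
    (∀ j k : ℕ, 1 ≤ j → j ≤ n → 1 ≤ k → k ≤ n →
        ((minmaxTree (permList n p)).childB (entryAt n p j) (entryAt n p k) =
         (minmaxTree (permList n q)).childB (entryAt n q j) (entryAt n q k))) ∧
    (∀ i : ℕ, 1 ≤ i → i ≤ n →
        ((minmaxTree (permList n p)).IsLeaf (entryAt n p i) ↔
         (minmaxTree (permList n q)).IsLeaf (entryAt n q i))) := by
  have hc := strictAntiOn_complement n
  have hT : minmaxTree (permList n q) = (minmaxTree (permList n p)).map (n + 1 - ·) := by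
    rw [permList_eq_map_of_complement hq, minmaxTree_map_of_strictAntiOn hc (permList_mem_Iic p)]
  have hlabels : (minmaxTree (permList n p)).labels ⊆ Set.Iic n :=
    (labels_mmAux_subset _ _).trans (permList_mem_Iic p)
  refine ⟨fun j k _ hj _ hk => ?_, fun i _ hi => ?_⟩
  · rw [hT, entryAt_of_complement hq (by omega : j - 1 < n),
      entryAt_of_complement hq (by omega : k - 1 < n),
      BTree.childB_map hc.injOn hlabels (entryAt_mem_Iic p (by omega))
        (entryAt_mem_Iic p (by omega))]
  · rw [hT, entryAt_of_complement hq (by omega : i - 1 < n),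
      BTree.isLeaf_map hc.injOn hlabels (entryAt_mem_Iic p (by omega))]

/-- For `n ≥ 1`, if `q` is the complement of the permutation `p`
(i.e. `q_i = n + 1 − p_i` for all `i`), then the minmax trees of `p` and `q` have the
same shape on positions: `p_j` is a child of `p_k` iff `q_j` is a child of `q_k`;
in particular `p_i` is a leaf iff `q_i` is a leaf. -/
theorem complement_same_shape (n : ℕ) (hn : 1 ≤ n) (p q : Equiv.Perm (Fin n))
    (hq : ∀ i : Fin n, ((q i : ℕ) + 1) = n + 1 - ((p i : ℕ) + 1)) :
    (∀ j k : ℕ, 1 ≤ j → j ≤ n → 1 ≤ k → k ≤ n →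
        ((minmaxTree (permList n p)).childB (entryAt n p j) (entryAt n p k) =
         (minmaxTree (permList n q)).childB (entryAt n q j) (entryAt n q k))) ∧
    (∀ i : ℕ, 1 ≤ i → i ≤ n →
        ((minmaxTree (permList n p)).IsLeaf (entryAt n p i) ↔
         (minmaxTree (permList n q)).IsLeaf (entryAt n q i))) :=
  complement_same_shape_general n p q hq
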